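/- arXiv:1712.03662 — 4 statements merged into one kernel-verified Lean document; each statement's English description precedes it below -/
import Mathlib

section
/- For every integer n ≥ 1, the matrices R_m satisfy Σ_{m=0}^{n} (−1)^{n−m} · R_m · (R_{n−m})ᵀ = 0 in the 2×2 complex matrices. Equivalently, the formal power series R(z) = Σ_{m≥0} R_m z^m with 2×2 matrix coefficients satisfies the twisted loop group condition R(z)·R(−z)ᵀ = I, where R(−z)ᵀ := Σ_{m≥0} (−1)^m (R_m)ᵀ z^m. -/
open scoped Matrix

/-- The rational coefficient `a_m = (6m)! / ((6m−1)·(3m)!·(2m)!·1728^m)` (note `a_0 = −1`). -/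
noncomputable def aCoeff (m : ℕ) : ℚ :=
  (Nat.factorial (6 * m) : ℚ) /
    (((6 * m : ℚ) - 1) * (Nat.factorial (3 * m)) * (Nat.factorial (2 * m)) * 1728 ^ m)

lemma aCoeff_zero : aCoeff 0 = -1 := by
  simp [aCoeff, Nat.factorial]

lemma aCoeff_rec (m : ℕ) :
    aCoeff (m + 1) * (144 * ((m : ℚ) + 1)) = aCoeff m * (36 * (m : ℚ) ^ 2 - 1) := by
  have f6 : ((Nat.factorial (6 * (m + 1))) : ℚ) =
      ((6*m+6)*(6*m+5)*(6*m+4)*(6*m+3)*(6*m+2)*(6*m+1) : ℚ) * (Nat.factorial (6*m) : ℚ) := by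
    rw [show 6 * (m + 1) = 6*m + 6 by omega]
    push_cast [Nat.factorial_succ]
    ring
  have f3 : ((Nat.factorial (3 * (m + 1))) : ℚ) =
      ((3*m+3)*(3*m+2)*(3*m+1) : ℚ) * (Nat.factorial (3*m) : ℚ) := by
    rw [show 3 * (m + 1) = 3*m + 3 by omega]
    push_cast [Nat.factorial_succ]
    ring
  have f2 : ((Nat.factorial (2 * (m + 1))) : ℚ) =
      ((2*m+2)*(2*m+1) : ℚ) * (Nat.factorial (2*m) : ℚ) := by
    rw [show 2 * (m + 1) = 2*m + 2 by omega]
    push_cast [Nat.factorial_succ]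
    ring
  have n1 : ((6 : ℚ) * m - 1) ≠ 0 := by
    intro h
    have h2 : ((6 * m : ℕ) : ℚ) = 1 := by push_cast; linarith
    have : (6 * m : ℕ) = 1 := by exact_mod_cast h2
    omega
  have n2 : ((6 : ℚ) * (↑(m+1)) - 1) ≠ 0 := by
    push_cast
    have : (0:ℚ) ≤ (m:ℚ) := by positivity
    intro h; linarith
  have n3 : (Nat.factorial (3*m) : ℚ) ≠ 0 := by exact_mod_cast (Nat.factorial_pos _).ne'
  have n4 : (Nat.factorial (2*m) : ℚ) ≠ 0 := by exact_mod_cast (Nat.factorial_pos _).ne'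
  have n5 : ((1728 : ℚ) ^ m) ≠ 0 := by positivity
  have d1 : (((6 * ((m+1):ℕ) : ℚ) - 1) * (Nat.factorial (3 * (m+1))) * (Nat.factorial (2 * (m+1))) * 1728 ^ (m+1)) ≠ 0 := by
    have n3' : (Nat.factorial (3*(m+1)) : ℚ) ≠ 0 := by exact_mod_cast (Nat.factorial_pos _).ne'
    have n4' : (Nat.factorial (2*(m+1)) : ℚ) ≠ 0 := by exact_mod_cast (Nat.factorial_pos _).ne'
    have n5' : ((1728 : ℚ) ^ (m+1)) ≠ 0 := by positivity
    exact mul_ne_zero (mul_ne_zero (mul_ne_zero n2 n3') n4') n5'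
  have d2 : (((6 * m : ℚ) - 1) * (Nat.factorial (3 * m)) * (Nat.factorial (2 * m)) * 1728 ^ m) ≠ 0 :=
    mul_ne_zero (mul_ne_zero (mul_ne_zero n1 n3) n4) n5
  unfold aCoeff
  rw [div_mul_eq_mul_div, div_mul_eq_mul_div, div_eq_div_iff d1 d2, f6, f3, f2, pow_succ]
  push_cast
  ring

lemma key_q (n : ℕ) (hn : 1 ≤ n) :
    ∑ m ∈ Finset.range (n + 1),
      (-1 : ℚ) ^ m * aCoeff m * aCoeff (n - m) * (1 - 36 * (m : ℚ) * ((n - m : ℕ) : ℚ)) = 0 := by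
  have hn0 : (n : ℚ) ≠ 0 := by positivity 
  set t : ℕ → ℚ := fun m =>
    (-1 : ℚ) ^ m * aCoeff m * aCoeff (n - m) * (1 - 36 * (m : ℚ) * ((n - m : ℕ) : ℚ)) with ht
  set s : ℕ → ℚ := fun m =>
    (m : ℚ) * (36 * ((n - m : ℕ) : ℚ) ^ 2 - 1) * (-1 : ℚ) ^ m * aCoeff m * aCoeff (n - m) with hs
  suffices h : ∑ m ∈ Finset.range (n + 1), (n : ℚ) * t m = 0 by
    rw [← Finset.mul_sum] at h
    exact (mul_eq_zero.mp h).resolve_left hn0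
  have tel : ∀ m ∈ Finset.range n, (n : ℚ) * t m = s (m + 1) - s m := by
    intro m hm
    rw [Finset.mem_range] at hm
    have r1 := aCoeff_rec m
    have r2 := aCoeff_rec (n - (m + 1))
    have hidx : n - (m + 1) + 1 = n - m := by omega
    rw [hidx] at r2
    have c1 : ((n - m : ℕ) : ℚ) = (n : ℚ) - m := by
      rw [Nat.cast_sub (by omega)]
    have c2 : ((n - (m + 1) : ℕ) : ℚ) = (n : ℚ) - m - 1 := by
      rw [Nat.cast_sub (by omega)]; push_cast; ring
    simp only [ht, hs, c1, c2]
    rw [c2] at r2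
    push_cast
    linear_combination ((-1 : ℚ) ^ (m + 1) * ((m : ℚ) + 1) * aCoeff (m + 1)) * r2 +
      ((-1 : ℚ) ^ m * ((n : ℚ) - m) * aCoeff (n - m)) * r1
  rw [Finset.sum_range_succ, Finset.sum_congr rfl tel, Finset.sum_range_sub]
  have hsn : s n = (n : ℚ) * (-1 : ℚ) ^ n * aCoeff n := by
    simp [hs, aCoeff_zero]
  have hs0 : s 0 = 0 := by simp [hs]
  have htn : t n = -((-1 : ℚ) ^ n * aCoeff n) := by
    simp [ht, aCoeff_zero]
  rw [hsn, hs0, htn]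
  ring

lemma negpow_sub (n m : ℕ) (hm : m ≤ n) : (-1 : ℂ) ^ (n - m) = (-1 : ℂ) ^ n * (-1 : ℂ) ^ m := by
  have h1 : (-1 : ℂ) ^ (n - m) * (-1 : ℂ) ^ m = (-1 : ℂ) ^ n := by
    rw [← pow_add, Nat.sub_add_cancel hm]
  have h2 : (-1 : ℂ) ^ m * (-1 : ℂ) ^ m = 1 := by
    rw [← pow_add, ← two_mul, pow_mul]; norm_num
  rw [← h1, mul_assoc, h2, mul_one]

lemma reflect_zero (F : ℕ → ℂ) (n : ℕ) (h : ∀ m ≤ n, F (n - m) = -F m) :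
    ∑ m ∈ Finset.range (n + 1), F m = 0 := by
  have h1 : ∑ m ∈ Finset.range (n + 1), F m = ∑ m ∈ Finset.range (n + 1), F (n - m) := by
    have := Finset.sum_range_reflect F (n + 1)
    simp only [Nat.add_sub_cancel] at this
    exact this.symm
  have h2 : ∑ m ∈ Finset.range (n + 1), F (n - m) = -∑ m ∈ Finset.range (n + 1), F m := by
    rw [← Finset.sum_neg_distrib]
    refine Finset.sum_congr rfl fun m hm => ?_
    exact h m (by rw [Finset.mem_range] at hm; omega)
  have h3 := h1.trans h2
  linear_combination h3 / 2

/-- The matrix coefficients `R_m` of the twisted loop group element attached to the `A₂`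
Frobenius manifold at the point `(u₁,u₂) = (2,−2)`. -/
noncomputable def Rmat (m : ℕ) : Matrix (Fin 2) (Fin 2) ℂ :=
  (aCoeff m : ℂ) •
    !![-1, (-1 : ℂ) ^ m * ((6 * m : ℕ) : ℂ) * Complex.I;
       -(((6 * m : ℕ) : ℂ)) * Complex.I, (-1 : ℂ) ^ (m + 1)]

lemma RRT (m k : ℕ) : Rmat m * (Rmat k)ᵀ =
    ((aCoeff m : ℂ) * (aCoeff k : ℂ)) •
      !![1 - (-1 : ℂ) ^ (m + k) * (36 * (m : ℂ) * (k : ℂ)),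
         Complex.I * (6 * (k : ℂ) - (-1 : ℂ) ^ (m + k) * (6 * (m : ℂ)));
         Complex.I * (6 * (m : ℂ) - (-1 : ℂ) ^ (m + k) * (6 * (k : ℂ))),
         (-1 : ℂ) ^ (m + k) - 36 * (m : ℂ) * (k : ℂ)] := by
  have ht : (!![-1, (-1 : ℂ) ^ k * ((6 * k : ℕ) : ℂ) * Complex.I;
       -(((6 * k : ℕ) : ℂ)) * Complex.I, (-1 : ℂ) ^ (k + 1)])ᵀ
      = !![-1, -(((6 * k : ℕ) : ℂ)) * Complex.I;
           (-1 : ℂ) ^ k * ((6 * k : ℕ) : ℂ) * Complex.I, (-1 : ℂ) ^ (k + 1)] := by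
    ext i j
    fin_cases i <;> fin_cases j <;> rfl
  unfold Rmat
  rw [Matrix.transpose_smul, ht, Matrix.smul_mul, Matrix.mul_smul, smul_smul,
    Matrix.mul_fin_two]
  congr 1
  ext i j
  fin_cases i <;> fin_cases j <;> simp <;> push_cast <;>
    first
      | ring1
      | linear_combination ((-1 : ℂ) ^ m * (-1 : ℂ) ^ k * 36 * (m : ℂ) * (k : ℂ)) * Complex.I_sq
      | linear_combination (-((-1 : ℂ) ^ m * (-1 : ℂ) ^ k * 36 * (m : ℂ) * (k : ℂ))) * Complex.I_sq
      | linear_combination (36 * (m : ℂ) * (k : ℂ)) * Complex.I_sq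
      | linear_combination (-(36 * (m : ℂ) * (k : ℂ))) * Complex.I_sq

lemma S00 (n : ℕ) (hn : 1 ≤ n) :
    ∑ m ∈ Finset.range (n + 1), (-1 : ℂ) ^ n * (-1 : ℂ) ^ m * (aCoeff m : ℂ) * (aCoeff (n - m) : ℂ) *
      (1 - (-1 : ℂ) ^ n * (36 * (m : ℂ) * ((n - m : ℕ) : ℂ))) = 0 := by
  rcases Nat.even_or_odd n with he | ho
  · have h1 : (-1 : ℂ) ^ n = 1 := he.neg_one_pow
    have h2 := congrArg (fun q : ℚ => (q : ℂ)) (key_q n hn)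
    push_cast at h2
    calc ∑ m ∈ Finset.range (n + 1), (-1 : ℂ) ^ n * (-1 : ℂ) ^ m * (aCoeff m : ℂ) * (aCoeff (n - m) : ℂ) *
          (1 - (-1 : ℂ) ^ n * (36 * (m : ℂ) * ((n - m : ℕ) : ℂ)))
        = ∑ m ∈ Finset.range (n + 1), (-1 : ℂ) ^ m * (aCoeff m : ℂ) * (aCoeff (n - m) : ℂ) *
          (1 - 36 * (m : ℂ) * ((n - m : ℕ) : ℂ)) := by
          refine Finset.sum_congr rfl fun m hm => ?_; rw [h1]; ring
      _ = 0 := h2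
  · have h1 : (-1 : ℂ) ^ n = -1 := ho.neg_one_pow
    refine reflect_zero _ n fun m hm => ?_
    simp only [Nat.sub_sub_self hm, negpow_sub n m hm, h1]
    ring

lemma S11 (n : ℕ) (hn : 1 ≤ n) :
    ∑ m ∈ Finset.range (n + 1), (-1 : ℂ) ^ n * (-1 : ℂ) ^ m * (aCoeff m : ℂ) * (aCoeff (n - m) : ℂ) *
      ((-1 : ℂ) ^ n - 36 * (m : ℂ) * ((n - m : ℕ) : ℂ)) = 0 := by
  rcases Nat.even_or_odd n with he | ho
  · have h1 : (-1 : ℂ) ^ n = 1 := he.neg_one_pow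
    have h2 := congrArg (fun q : ℚ => (q : ℂ)) (key_q n hn)
    push_cast at h2
    calc ∑ m ∈ Finset.range (n + 1), (-1 : ℂ) ^ n * (-1 : ℂ) ^ m * (aCoeff m : ℂ) * (aCoeff (n - m) : ℂ) *
          ((-1 : ℂ) ^ n - 36 * (m : ℂ) * ((n - m : ℕ) : ℂ))
        = ∑ m ∈ Finset.range (n + 1), (-1 : ℂ) ^ m * (aCoeff m : ℂ) * (aCoeff (n - m) : ℂ) *
          (1 - 36 * (m : ℂ) * ((n - m : ℕ) : ℂ)) := by
          refine Finset.sum_congr rfl fun m hm => ?_; rw [h1]; ring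
      _ = 0 := h2
  · have h1 : (-1 : ℂ) ^ n = -1 := ho.neg_one_pow
    refine reflect_zero _ n fun m hm => ?_
    simp only [Nat.sub_sub_self hm, negpow_sub n m hm, h1]
    ring

lemma S01 (n : ℕ) :
    ∑ m ∈ Finset.range (n + 1), (-1 : ℂ) ^ n * (-1 : ℂ) ^ m * (aCoeff m : ℂ) * (aCoeff (n - m) : ℂ) *
      (Complex.I * (6 * ((n - m : ℕ) : ℂ) - (-1 : ℂ) ^ n * (6 * (m : ℂ)))) = 0 := by
  refine reflect_zero _ n fun m hm => ?_
  rcases Nat.even_or_odd n with he | ho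
  · simp only [Nat.sub_sub_self hm, negpow_sub n m hm, he.neg_one_pow]
    ring
  · simp only [Nat.sub_sub_self hm, negpow_sub n m hm, ho.neg_one_pow]
    ring

lemma S10 (n : ℕ) :
    ∑ m ∈ Finset.range (n + 1), (-1 : ℂ) ^ n * (-1 : ℂ) ^ m * (aCoeff m : ℂ) * (aCoeff (n - m) : ℂ) *
      (Complex.I * (6 * (m : ℂ) - (-1 : ℂ) ^ n * (6 * ((n - m : ℕ) : ℂ)))) = 0 := by
  refine reflect_zero _ n fun m hm => ?_
  rcases Nat.even_or_odd n with he | ho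
  · simp only [Nat.sub_sub_self hm, negpow_sub n m hm, he.neg_one_pow]
    ring
  · simp only [Nat.sub_sub_self hm, negpow_sub n m hm, ho.neg_one_pow]
    ring

/-- The twisted loop group condition `R(z)·R(−z)ᵀ = I` in coefficient form:
for every `n ≥ 1`, `Σ_{m=0}^{n} (−1)^{n−m} · R_m · (R_{n−m})ᵀ = 0`. -/
theorem twisted_loop_group_condition_A2 (n : ℕ) (hn : 1 ≤ n) :
    ∑ m ∈ Finset.range (n + 1), ((-1 : ℂ) ^ (n - m)) • (Rmat m * (Rmat (n - m))ᵀ) = 0 := by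
  have hterm : ∀ m ∈ Finset.range (n + 1), ((-1 : ℂ) ^ (n - m)) • (Rmat m * (Rmat (n - m))ᵀ)
      = ((-1 : ℂ) ^ n * (-1 : ℂ) ^ m * (aCoeff m : ℂ) * (aCoeff (n - m) : ℂ)) •
        !![1 - (-1 : ℂ) ^ n * (36 * (m : ℂ) * ((n - m : ℕ) : ℂ)),
           Complex.I * (6 * ((n - m : ℕ) : ℂ) - (-1 : ℂ) ^ n * (6 * (m : ℂ)));
           Complex.I * (6 * (m : ℂ) - (-1 : ℂ) ^ n * (6 * ((n - m : ℕ) : ℂ))),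
           (-1 : ℂ) ^ n - 36 * (m : ℂ) * ((n - m : ℕ) : ℂ)] := by
    intro m hm
    rw [Finset.mem_range] at hm
    have hm' : m ≤ n := by omega
    rw [RRT, smul_smul, Nat.add_sub_cancel' hm', negpow_sub n m hm']
    congr 1
    ring
  rw [Finset.sum_congr rfl hterm]
  ext i j
  rw [Matrix.sum_apply]
  fin_cases i <;> fin_cases j <;>
    simp only [Matrix.smul_apply, Matrix.cons_val', Matrix.cons_val_zero, Matrix.cons_val_one,
      Matrix.head_cons, Matrix.head_fin_const, Matrix.empty_val', Matrix.cons_val_fin_one,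
      smul_eq_mul, Matrix.zero_apply, Fin.mk_zero, Fin.mk_one, Fin.isValue]
  · exact Eq.trans (Finset.sum_congr rfl fun m hm => by simp [Matrix.of_apply]<;> ring) (S00 n hn)
  · exact Eq.trans (Finset.sum_congr rfl fun m hm => by simp [Matrix.of_apply]<;> ring) (S01 n)
  · exact Eq.trans (Finset.sum_congr rfl fun m hm => by simp [Matrix.of_apply]<;> ring) (S10 n)
  · exact Eq.trans (Finset.sum_congr rfl fun m hm => by simp [Matrix.of_apply]<;> ring) (S11 n hn)
end

section
/- Let U = diag(2,−2) and V = (1/6)·[[0, i], [−i, 0]] be 2×2 complex matrices. Then for every k ≥ 0 the matrices R_k satisfy the recursion R_{k+1}·U − U·R_{k+1} = (k·I + V)·R_k. -/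
open scoped Matrix

/-- `U = diag(2,−2)`. -/
noncomputable def Umat : Matrix (Fin 2) (Fin 2) ℂ := !![2, 0; 0, -2]

/-- `V = (1/6)·[[0, i], [−i, 0]]`. -/
noncomputable def Vmat : Matrix (Fin 2) (Fin 2) ℂ :=
  (6 : ℂ)⁻¹ • !![0, Complex.I; -Complex.I, 0]

/-! Since `U` is diagonal, the `(i, j)` entry of `R U - U R` is `(u_j - u_i) R_ij`. On the diagonal
the recursion then says that `V R_k` cancels `k R_k` there, which is `i² = -1`; off the diagonal it
reduces to the ratio of consecutive coefficients, `144 (k + 1) a_{k+1} = (36 k² - 1) a_k`, which is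
read off from the factorials. -/

theorem Matrix.mul_diagonal_sub_diagonal_mul_apply {n α : Type*} [Fintype n] [DecidableEq n]
    [CommRing α] (A : Matrix n n α) (d : n → α) (i j : n) :
    (A * Matrix.diagonal d - Matrix.diagonal d * A) i j = (d j - d i) * A i j := by
  rw [Matrix.sub_apply, Matrix.mul_diagonal, Matrix.diagonal_mul]
  ring

theorem Umat_eq_diagonal : Umat = Matrix.diagonal ![2, -2] := by
  rw [Matrix.diagonal_fin_two]
  rfl

theorem aCoeff_succ (k : ℕ) :
    144 * ((k : ℚ) + 1) * aCoeff (k + 1) = (6 * k - 1) * (6 * k + 1) * aCoeff k := by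
  have hk : (6 * k : ℚ) - 1 ≠ 0 := by
    intro h
    have h' : ((6 * k : ℕ) : ℚ) = (1 : ℕ) := by push_cast; linarith
    have := Nat.cast_injective h'
    omega
  have h6 : 6 * (k + 1) = 6 * k + 5 + 1 := by ring
  have h3 : 3 * (k + 1) = 3 * k + 2 + 1 := by ring
  have h2 : 2 * (k + 1) = 2 * k + 1 + 1 := by ring
  unfold aCoeff
  rw [h6, h3, h2]
  simp only [Nat.factorial_succ]
  push_cast
  rw [show 6 * ((k : ℚ) + 1) - 1 = 6 * k + 5 by ring, mul_div_assoc', mul_div_assoc',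
    div_eq_div_iff (by positivity) (by simp [hk, Nat.factorial_ne_zero])]
  ring

/-- The recursion `[R_{k+1}, U] = (k·I + V)·R_k` defining the twisted loop group element of the
`A₂` Frobenius manifold at `(u₁,u₂) = (2,−2)`. -/
theorem A2_recursion (k : ℕ) :
    Rmat (k + 1) * Umat - Umat * Rmat (k + 1) =
      ((k : ℂ) • (1 : Matrix (Fin 2) (Fin 2) ℂ) + Vmat) * Rmat k := by
  have hrec : 144 * ((k : ℂ) + 1) * aCoeff (k + 1) = (6 * k - 1) * (6 * k + 1) * aCoeff k := by
    exact_mod_cast congrArg (Rat.cast : ℚ → ℂ) (aCoeff_succ k)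
  rw [Umat_eq_diagonal]
  ext i j
  rw [Matrix.mul_diagonal_sub_diagonal_mul_apply]
  fin_cases i <;> fin_cases j <;>
    simp only [Fin.zero_eta, Fin.mk_one, Fin.isValue, Rmat, Vmat, Matrix.add_apply,
      Matrix.mul_apply, Fin.sum_univ_two, Matrix.smul_apply, Matrix.smul_of, Matrix.smul_cons,
      Matrix.smul_empty, Matrix.of_apply, Matrix.cons_val', Matrix.cons_val_zero,
      Matrix.cons_val_one, Matrix.cons_val_fin_one, Matrix.one_apply_eq, Matrix.one_apply_ne, ne_eq,
      zero_ne_one, one_ne_zero, not_false_eq_true, smul_eq_mul, Nat.cast_mul, Nat.cast_ofNat,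
      Nat.cast_add, Nat.cast_one]
  · linear_combination (k * aCoeff k : ℂ) * Complex.I_sq
  · linear_combination ((-1) ^ k * Complex.I / 6) * hrec
  · linear_combination (-Complex.I / 6) * hrec
  · linear_combination (k * aCoeff k * (-1) ^ k : ℂ) * Complex.I_sq
end

section
/- For every real z > 0 and every real ε ≠ 0, the contour-shifted Gaussian integral with a double pole evaluates as ∫_{−∞}^{∞} (x+iε)^{−2} · exp(−(x+iε)²/(2z)) dx = −√(2π/z). In particular (taking z = 1/2) the regularized integral of s^{−2}e^{−s²} along the real line deformed to avoid 0 equals −2√π. -/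
/-!
Writing `w = x + εi`, the function `-w⁻¹ · exp (-b w²)` is an antiderivative of
`w⁻² · exp (-b w²) + 2b · exp (-b w²)`, and it is integrable on the line because `|w| ≥ |ε|`.
An integrable function with integrable derivative has total integral zero, so the double-pole
integral equals `-2b` times the shifted Gaussian integral `√(π / b)`.
-/

open MeasureTheory Complex Real

section ShiftedLine

variable {b : ℂ} {ε : ℝ}

lemma ofReal_add_ofReal_mul_I_ne_zero (hε : ε ≠ 0) (x : ℝ) : (x : ℂ) + ε * I ≠ 0 := by
  intro h
  simpa [hε] using congrArg Complex.im h

lemma abs_le_norm_ofReal_add_ofReal_mul_I (x : ℝ) : |ε| ≤ ‖(x : ℂ) + ε * I‖ := by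
  simpa using abs_im_le_norm ((x : ℂ) + ε * I)

lemma integrable_inv_pow_mul_cexp_neg_mul_sq_add_real_mul_I (hb : 0 < b.re) (hε : ε ≠ 0)
    (n : ℕ) : Integrable fun x : ℝ => (((x : ℂ) + ε * I) ^ n)⁻¹ * cexp (-b * (x + ε * I) ^ 2) := by
  refine (GaussianFourier.integrable_cexp_neg_mul_sq_add_real_mul_I hb ε).bdd_mul
    (c := (|ε| ^ n)⁻¹) ?_ (ae_of_all _ fun x => ?_)
  · have hw0 := ofReal_add_ofReal_mul_I_ne_zero hε
    exact Continuous.aestronglyMeasurable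
      (by fun_prop (disch := exact fun x => pow_ne_zero n (hw0 x)))
  · rw [norm_inv, norm_pow]
    have hε' : 0 < |ε| := abs_pos.mpr hε
    gcongr
    exact abs_le_norm_ofReal_add_ofReal_mul_I x

lemma hasDerivAt_neg_inv_mul_cexp_neg_mul_sq (hε : ε ≠ 0) (x : ℝ) :
    HasDerivAt (fun x : ℝ => -((x : ℂ) + ε * I)⁻¹ * cexp (-b * (x + ε * I) ^ 2))
      ((((x : ℂ) + ε * I) ^ 2)⁻¹ * cexp (-b * (x + ε * I) ^ 2) +
        2 * b * cexp (-b * (x + ε * I) ^ 2)) x := by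
  have hw : HasDerivAt (fun x : ℝ => (x : ℂ) + ε * I) 1 x :=
    (hasDerivAt_id x).ofReal_comp.add_const _
  have hw0 := ofReal_add_ofReal_mul_I_ne_zero hε x
  refine ((hw.fun_inv hw0).fun_neg.fun_mul ((hw.fun_pow 2).const_mul (-b)).cexp).congr_deriv ?_
  field_simp
  ring

theorem integral_inv_sq_mul_cexp_neg_mul_sq_add_real_mul_I (hb : 0 < b.re) (hε : ε ≠ 0) :
    ∫ x : ℝ, (((x : ℂ) + ε * I) ^ 2)⁻¹ * cexp (-b * (x + ε * I) ^ 2) =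
      -2 * b * (π / b) ^ (1 / 2 : ℂ) := by
  have hgauss := GaussianFourier.integrable_cexp_neg_mul_sq_add_real_mul_I hb ε
  have hpole := integrable_inv_pow_mul_cexp_neg_mul_sq_add_real_mul_I hb hε 2
  have hzero := integral_eq_zero_of_hasDerivAt_of_integrable
    (hasDerivAt_neg_inv_mul_cexp_neg_mul_sq hε) (hpole.add (hgauss.const_mul (2 * b)))
    (by simpa using (integrable_inv_pow_mul_cexp_neg_mul_sq_add_real_mul_I hb hε 1).neg)
  rw [integral_add hpole (hgauss.const_mul _), integral_const_mul,
    GaussianFourier.integral_cexp_neg_mul_sq_add_real_mul_I hb] at hzero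
  linear_combination hzero

theorem integral_inv_sq_mul_cexp_neg_ofReal_mul_sq_add_real_mul_I {b : ℝ} (hb : 0 < b)
    (hε : ε ≠ 0) :
    ∫ x : ℝ, (((x : ℂ) + ε * I) ^ 2)⁻¹ * cexp (-b * (x + ε * I) ^ 2) = -2 * √(π * b) := by
  have hsqrt : b * √(π / b) = √(π * b) := by
    rw [show π * b = b ^ 2 * (π / b) by field_simp, Real.sqrt_mul (sq_nonneg b),
      Real.sqrt_sq hb.le]
  rw [integral_inv_sq_mul_cexp_neg_mul_sq_add_real_mul_I (by simpa using hb) hε,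
    show (1 / 2 : ℂ) = ((1 / 2 : ℝ) : ℂ) by norm_num, ← ofReal_div,
    ← ofReal_cpow (by positivity), ← Real.sqrt_eq_rpow, mul_assoc, ← ofReal_mul, hsqrt]

end ShiftedLine

/-- The contour-shifted Gaussian integral with a double pole:
`∫_{−∞}^{∞} (x+iε)^{−2}·exp(−(x+iε)²/(2z)) dx = −√(2π/z)` for real `z > 0` and real `ε ≠ 0`;
in particular (taking `z = 1/2`) the regularized integral of `s^{−2}e^{−s²}` along the real
line deformed to avoid `0` equals `−2√π`. -/
theorem shifted_gaussian_double_pole_integral :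
    (∀ (z ε : ℝ), 0 < z → ε ≠ 0 →
      ∫ x : ℝ, (((x : ℂ) + (ε : ℂ) * Complex.I) ^ 2)⁻¹ *
          Complex.exp (-((x : ℂ) + (ε : ℂ) * Complex.I) ^ 2 / (2 * (z : ℂ))) =
        -(Real.sqrt (2 * Real.pi / z) : ℂ)) ∧
    (∀ ε : ℝ, ε ≠ 0 →
      ∫ x : ℝ, (((x : ℂ) + (ε : ℂ) * Complex.I) ^ 2)⁻¹ *
          Complex.exp (-((x : ℂ) + (ε : ℂ) * Complex.I) ^ 2) =
        -2 * (Real.sqrt Real.pi : ℂ)) := by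
  refine ⟨fun z ε hz hε => ?_, fun ε hε => ?_⟩
  · have hsqrt : √(2 * π / z) = 2 * √(π * (2 * z)⁻¹) := by
      rw [show 2 * π / z = 2 ^ 2 * (π * (2 * z)⁻¹) by field_simp,
        Real.sqrt_mul (by positivity), Real.sqrt_sq zero_le_two]
    have hexp (w : ℂ) : cexp (-w ^ 2 / (2 * z)) = cexp (-(((2 * z)⁻¹ : ℝ) : ℂ) * w ^ 2) := by
      congr 1
      push_cast
      ring
    simp_rw [hexp, hsqrt]
    rw [integral_inv_sq_mul_cexp_neg_ofReal_mul_sq_add_real_mul_I (by positivity) hε]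
    push_cast
    ring
  · simpa using integral_inv_sq_mul_cexp_neg_ofReal_mul_sq_add_real_mul_I one_pos hε
end

section
/- Let D = {(g,n) ∈ ℕ×ℕ : g ≥ 1 and (g,n) ≠ (1,0)} and let d : D → ℕ satisfy: (a) d(g,n) = d(g−1, n+2) for all g ≥ 2 and n ≥ 0; (b) d(g,n) = d(h, i+1) + d(g−h, n−i+1) for all g ≥ 2, n ≥ 0, all h with 1 ≤ h ≤ g−1 and all i with 0 ≤ i ≤ n; (c) d(g,n) ≤ 3g−3+n for all (g,n) ∈ D; and (d) d(1,1) ≠ 0. Then d(g,n) = 2g−2+n for every (g,n) ∈ D. -/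
/-- The degree of the class `Θ_{g,n}` is `2g−2+n`: if `d : ℕ → ℕ → ℕ` is defined on
`D = {(g,n) : g ≥ 1, (g,n) ≠ (1,0)}` and satisfies
(a) `d(g,n) = d(g−1,n+2)` for `g ≥ 2`,
(b) `d(g,n) = d(h,i+1) + d(g−h,n−i+1)` for `g ≥ 2`, `1 ≤ h ≤ g−1`, `0 ≤ i ≤ n`,
(c) `d(g,n) ≤ 3g−3+n` on `D`, and
(d) `d(1,1) ≠ 0`,
then `d(g,n) = 2g−2+n` on all of `D`. -/
theorem degree_is_2g_minus_2_plus_n (d : ℕ → ℕ → ℕ)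
    (ha : ∀ g n : ℕ, 2 ≤ g → d g n = d (g - 1) (n + 2))
    (hb : ∀ g n h i : ℕ, 2 ≤ g → 1 ≤ h → h ≤ g - 1 → i ≤ n →
      d g n = d h (i + 1) + d (g - h) (n - i + 1))
    (hc : ∀ g n : ℕ, 1 ≤ g → ((g, n) : ℕ × ℕ) ≠ (1, 0) → d g n ≤ 3 * g - 3 + n)
    (hd : d 1 1 ≠ 0) :
    ∀ g n : ℕ, 1 ≤ g → ((g, n) : ℕ × ℕ) ≠ (1, 0) → d g n = 2 * g - 2 + n := by

  have h11 : d 1 1 = 1 := by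
    have := hc 1 1 (by norm_num) (by decide)
    omega
  have hadd : ∀ a b : ℕ, 1 ≤ a → 1 ≤ b → d 1 (a + b) = d 1 a + d 1 b := by
    intro a b ha1 hb1
    have h1 := hb 2 (a + b - 2) 1 (a - 1) (by norm_num) le_rfl (by norm_num) (by omega)
    have h2 := ha 2 (a + b - 2) (by norm_num)
    have e1 : a - 1 + 1 = a := by omega
    have e2 : a + b - 2 - (a - 1) + 1 = b := by omega
    have e3 : a + b - 2 + 2 = a + b := by omega
    have e4 : (2 : ℕ) - 1 = 1 := by norm_num
    rw [e4, e1, e2] at h1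
    rw [e4, e3] at h2
    omega
  have hone : ∀ m : ℕ, 1 ≤ m → d 1 m = m := by
    intro m hm
    induction m with
    | zero => omega
    | succ k ih =>
      rcases Nat.lt_or_ge k 1 with h | h
      · interval_cases k
        exact h11
      · have := hadd k 1 h le_rfl
        rw [ih h, h11] at this
        omega
  have hred : ∀ g, 1 ≤ g → ∀ n, d g n = d 1 (n + 2 * (g - 1)) := by
    intro g
    induction g with
    | zero => omega
    | succ k ih =>
      intro _ n
      rcases Nat.lt_or_ge k 1 with h | h
      · interval_cases k
        simp
      · have h2 := ha (k + 1) n (by omega)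
        have e1 : k + 1 - 1 = k := by omega
        have e2 : n + 2 + 2 * (k - 1) = n + 2 * (k + 1 - 1) := by omega
        rw [e1] at h2
        rw [h2, ih h (n + 2), e2]
  intro g n hg hne
  have hne' : ¬(g = 1 ∧ n = 0) := by
    rintro ⟨h1, h2⟩
    exact hne (by simp [h1, h2])
  rw [hred g hg n, hone _ (by omega)]
  omega
end
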